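/- arXiv:2004.07681 — 3 statements merged into one kernel-verified Lean document; each statement's English description precedes it below -/
import Mathlib

section
/- Let N ≥ 1 and let H be an N×N Hermitian matrix over ℂ. Then the smallest eigenvalue of the de-signed matrix H^d is at most the smallest eigenvalue of H, i.e. λ_min(H^d) ≤ λ_min(H). -/
/-!
Let `v` be a unit eigenvector of `H` for `λ_min(H)` and `|v|` its entrywise modulus. Term by
term, `⟨|v|, H^d |v|⟩ ≤ ⟨v, H v⟩ = λ_min(H)`: diagonal terms agree, and off the diagonal
`-|H_ij| |v_i| |v_j|` is a lower bound for `Re (conj v_i H_ij v_j)`. Since `|v|` is again a unit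
vector and `H^d - λ_min(H^d)` is positive semidefinite, `λ_min(H^d) ≤ ⟨|v|, H^d |v|⟩`.
-/

open Matrix RCLike ComplexConjugate
open scoped MatrixOrder ComplexOrder

variable {𝕜 n : Type*} [RCLike 𝕜] [Fintype n]

namespace Matrix

theorem re_star_dotProduct_mulVec (A : Matrix n n 𝕜) (x : n → 𝕜) :
    re (star x ⬝ᵥ A *ᵥ x) = ∑ i, ∑ j, re (conj (x i) * A i j * x j) := by
  simp only [dotProduct, mulVec, Finset.mul_sum, map_sum, Pi.star_apply, RCLike.star_def,
    mul_assoc]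

theorem re_star_dotProduct_self (x : n → 𝕜) : re (star x ⬝ᵥ x) = ∑ i, ‖x i‖ ^ 2 := by
  simp only [dotProduct, map_sum, Pi.star_apply, RCLike.star_def, RCLike.conj_mul]
  norm_cast

theorem re_conj_mul_mul_self (a x : 𝕜) : re (conj x * a * x) = re a * ‖x‖ ^ 2 := by
  rw [mul_comm _ a, mul_assoc, RCLike.conj_mul, ← ofReal_pow, re_mul_ofReal]

theorem re_conj_norm_mul_mul_norm (b x y : 𝕜) :
    re (conj (‖x‖ : 𝕜) * b * ‖y‖) = re b * (‖x‖ * ‖y‖) := by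
  rw [conj_ofReal, mul_comm _ b, mul_assoc, ← ofReal_mul, re_mul_ofReal]

theorem neg_norm_mul_le_re_conj_mul_mul (a x y : 𝕜) :
    -(‖a‖ * (‖x‖ * ‖y‖)) ≤ re (conj x * a * y) := by
  have h := neg_le_of_abs_le (abs_re_le_norm (conj x * a * y))
  rwa [norm_mul, norm_mul, RCLike.norm_conj, mul_comm ‖x‖, mul_assoc] at h

theorem re_star_dotProduct_mulVec_norm_le {A B : Matrix n n 𝕜}
    (hdiag : ∀ i, re (B i i) ≤ re (A i i)) (hoff : ∀ i j, i ≠ j → re (B i j) ≤ -‖A i j‖)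
    (v : n → 𝕜) :
    re (star (fun i ↦ (‖v i‖ : 𝕜)) ⬝ᵥ B *ᵥ fun i ↦ (‖v i‖ : 𝕜)) ≤ re (star v ⬝ᵥ A *ᵥ v) := by
  rw [re_star_dotProduct_mulVec, re_star_dotProduct_mulVec]
  refine Finset.sum_le_sum fun i _ ↦ Finset.sum_le_sum fun j _ ↦ ?_
  rw [re_conj_norm_mul_mul_norm]
  rcases eq_or_ne i j with rfl | hij
  · rw [re_conj_mul_mul_self, ← sq]
    exact mul_le_mul_of_nonneg_right (hdiag i) (by positivity)
  · calc re (B i j) * (‖v i‖ * ‖v j‖) ≤ -‖A i j‖ * (‖v i‖ * ‖v j‖) :=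
          mul_le_mul_of_nonneg_right (hoff i j hij) (by positivity)
      _ ≤ re (conj (v i) * A i j * v j) := by
          simpa only [neg_mul] using neg_norm_mul_le_re_conj_mul_mul (A i j) (v i) (v j)

variable [DecidableEq n]

theorem IsHermitian.algebraMap_iInf_eigenvalues_le {A : Matrix n n 𝕜}
    (hA : A.IsHermitian) : algebraMap ℝ (Matrix n n 𝕜) (⨅ i, hA.eigenvalues i) ≤ A := by
  rw [algebraMap_le_iff_le_spectrum hA.isSelfAdjoint, hA.spectrum_real_eq_range_eigenvalues]
  rintro _ ⟨i, rfl⟩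
  exact ciInf_le (Finite.bddBelow_range _) i

theorem IsHermitian.iInf_eigenvalues_mul_le_re_star_dotProduct_mulVec {A : Matrix n n 𝕜}
    (hA : A.IsHermitian) (x : n → 𝕜) :
    (⨅ i, hA.eigenvalues i) * ∑ i, ‖x i‖ ^ 2 ≤ re (star x ⬝ᵥ A *ᵥ x) := by
  have hpsd := (le_iff.mp hA.algebraMap_iInf_eigenvalues_le).dotProduct_mulVec_nonneg x
  rw [sub_mulVec, dotProduct_sub, Algebra.algebraMap_eq_smul_one, smul_mulVec, one_mulVec,
    dotProduct_smul, sub_nonneg] at hpsd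
  simpa only [RCLike.smul_re, re_star_dotProduct_self] using RCLike.re_le_re hpsd

end Matrix

theorem designed_min_eigenvalue_le_general
    (N : ℕ)
    (H Hd : Matrix (Fin N) (Fin N) ℂ)
    (hH : H.IsHermitian) (hHd : Hd.IsHermitian)
    (hdiag : ∀ i, Hd i i = H i i)
    (hoff : ∀ i j, i ≠ j → Hd i j = -((‖H i j‖ : ℝ) : ℂ)) :
    (⨅ i, hHd.eigenvalues i) ≤ ⨅ i, hH.eigenvalues i := by
  rcases isEmpty_or_nonempty (Fin N) with _ | _
  · simp only [Real.iInf_of_isEmpty, le_refl]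
  obtain ⟨j, hj⟩ := exists_eq_ciInf_of_finite (f := hH.eigenvalues)
  set v : Fin N → ℂ := ⇑(hH.eigenvectorBasis j)
  have hv : ∑ i, ‖v i‖ ^ 2 = 1 := by
    rw [← EuclideanSpace.norm_sq_eq, hH.eigenvectorBasis.orthonormal.1 j, one_pow]
  have hcompare := re_star_dotProduct_mulVec_norm_le (A := H) (B := Hd)
    (fun i ↦ (congrArg re (hdiag i)).le)
    (fun i j hij ↦ by simp [hoff i j hij]) v
  calc (⨅ i, hHd.eigenvalues i)
      = (⨅ i, hHd.eigenvalues i) * ∑ i, ‖(‖v i‖ : ℂ)‖ ^ 2 := by simp [hv]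
    _ ≤ re (star v ⬝ᵥ H *ᵥ v) :=
        (hHd.iInf_eigenvalues_mul_le_re_star_dotProduct_mulVec _).trans hcompare
    _ = ⨅ i, hH.eigenvalues i := by rw [← hj, hH.eigenvalues_eq j]

/-- For an N×N Hermitian matrix `H` over ℂ, the smallest eigenvalue of its
de-signed version `Hd` (same diagonal, off-diagonal entries `-(|H i j|)`) is at most the
smallest eigenvalue of `H`. -/
theorem designed_min_eigenvalue_le
    (N : ℕ) (hN : 1 ≤ N)
    (H Hd : Matrix (Fin N) (Fin N) ℂ)
    (hH : H.IsHermitian) (hHd : Hd.IsHermitian)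
    (hdiag : ∀ i, Hd i i = H i i)
    (hoff : ∀ i j, i ≠ j → Hd i j = -((‖H i j‖ : ℝ) : ℂ)) :
    (⨅ i, hHd.eigenvalues i) ≤ ⨅ i, hH.eigenvalues i :=
  designed_min_eigenvalue_le_general N H Hd hH hHd hdiag hoff
end

section
/- Let N ≥ 1 and let H be an N×N Hermitian matrix over ℂ. Suppose ψ ∈ ℂ^N is an eigenvector of H with eigenvalue λ_min(H) such that ψ_i ≠ 0 for every i, and suppose λ_min(H^d) = λ_min(H). Then there exists a diagonal unitary N×N matrix U such that U H U† = H^d. -/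
/-!
With `φ = |ψ|`, each term `conj φᵢ (H^d)ᵢⱼ φⱼ` of the quadratic form of `H^d` at `φ` has real
part at most that of `conj ψᵢ Hᵢⱼ ψⱼ`: the diagonal terms agree and the off-diagonal ones equal
`-|conj ψᵢ Hᵢⱼ ψⱼ|`. Summing, `⟪φ, H^d φ⟫ ≤ Re ⟪ψ, H ψ⟫ = λ ‖ψ‖² = λ ‖φ‖²`, while the variational
bound for `λ = λ_min(H^d)` gives the reverse inequality. Hence every termwise inequality is an
equality, i.e. `conj ψᵢ Hᵢⱼ ψⱼ ≤ 0` for `i ≠ j`, and `U = diag (conj ψᵢ / |ψᵢ|)` turns `H` into `H^d`.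
-/

open Matrix
open scoped ComplexOrder

namespace Matrix
variable {n 𝕜 : Type*} [Fintype n] [DecidableEq n] [RCLike 𝕜]

lemma IsHermitian.posSemidef_sub_smul_one {A : Matrix n n 𝕜} (hA : A.IsHermitian) {c : ℝ}
    (hc : ∀ i, c ≤ hA.eigenvalues i) : (A - c • 1).PosSemidef := by
  have hshift : (diagonal (RCLike.ofReal ∘ hA.eigenvalues) - c • 1 : Matrix n n 𝕜)
      = diagonal fun i ↦ ((hA.eigenvalues i - c : ℝ) : 𝕜) := by
    ext i j; by_cases h : i = j <;> simp [h, RCLike.real_smul_eq_coe_mul]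
  rw [hA.spectral_theorem, RCLike.real_smul_eq_coe_smul (K := 𝕜),
    ← map_one (Unitary.conjStarAlgAut 𝕜 _ hA.eigenvectorUnitary), ← map_smul, ← map_sub,
    ← RCLike.real_smul_eq_coe_smul, hshift, Unitary.conjStarAlgAut_apply]
  exact (PosSemidef.diagonal fun i ↦ by simpa using hc i).mul_mul_conjTranspose_same _

lemma IsHermitian.iInf_eigenvalues_mul_le_re_dotProduct {A : Matrix n n 𝕜} (hA : A.IsHermitian)
    (v : n → 𝕜) :
    (⨅ i, hA.eigenvalues i) * RCLike.re (star v ⬝ᵥ v) ≤ RCLike.re (star v ⬝ᵥ A *ᵥ v) := by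
  have := (hA.posSemidef_sub_smul_one fun i ↦ ciInf_le (Finite.bddBelow_range _) i
    ).re_dotProduct_nonneg v
  simpa [sub_mulVec, dotProduct_sub, smul_mulVec, dotProduct_smul, RCLike.smul_re] using this

variable {α : Type*} [CommRing α] [StarRing α]

lemma diagonal_mem_unitaryGroup {u : n → α} (hu : ∀ i, u i * star (u i) = 1) :
    diagonal u ∈ unitaryGroup n α := by
  rw [mem_unitaryGroup_iff, star_eq_conjTranspose, diagonal_conjTranspose, diagonal_mul_diagonal,
    ← diagonal_one]
  exact congrArg diagonal (funext hu)

lemma diagonal_mul_mul_conjTranspose_diagonal_apply (u : n → α) (M : Matrix n n α) (i j : n) :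
    (diagonal u * M * (diagonal u)ᴴ) i j = u i * M i j * star (u j) := by
  simp [diagonal_conjTranspose, mul_diagonal, diagonal_mul]

end Matrix

lemma Complex.eq_neg_norm_of_nonpos {z : ℂ} (hz : z ≤ 0) : z = -‖z‖ := by
  rw [← norm_neg, Complex.norm_of_nonneg' (neg_nonneg.mpr hz), neg_neg]

lemma Complex.re_dotProduct_mulVec {n : Type*} [Fintype n] (M : Matrix n n ℂ) (v : n → ℂ) :
    (star v ⬝ᵥ M *ᵥ v).re = ∑ p : n × n, (star (v p.1) * M p.1 p.2 * v p.2).re := by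
  simp [Fintype.sum_prod_type, dotProduct, mulVec, Finset.mul_sum, mul_assoc]

namespace Matrix
variable {n : Type*} [DecidableEq n]

noncomputable def deSigned (H : Matrix n n ℂ) : Matrix n n ℂ :=
  of fun i j ↦ if i = j then H i i else -‖H i j‖

variable (H : Matrix n n ℂ) (ψ : n → ℂ)

lemma star_mul_deSigned_mul_self (i : n) :
    star (‖ψ i‖ : ℂ) * H.deSigned i i * ‖ψ i‖ = star (ψ i) * H i i * ψ i := by
  calc star (‖ψ i‖ : ℂ) * H.deSigned i i * ‖ψ i‖ = H i i * (‖ψ i‖ : ℂ) ^ 2 := by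
        simp [deSigned]; ring
    _ = star (ψ i) * H i i * ψ i := by rw [← Complex.conj_mul', Complex.star_def]; ring

lemma star_mul_deSigned_mul_of_ne {i j : n} (hij : i ≠ j) :
    star (‖ψ i‖ : ℂ) * H.deSigned i j * ‖ψ j‖ = -‖star (ψ i) * H i j * ψ j‖ := by
  simp [deSigned, hij]

lemma re_star_mul_deSigned_mul_le (i j : n) :
    (star (‖ψ i‖ : ℂ) * H.deSigned i j * ‖ψ j‖).re ≤ (star (ψ i) * H i j * ψ j).re := by
  rcases eq_or_ne i j with rfl | hij
  · rw [star_mul_deSigned_mul_self]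
  · rw [star_mul_deSigned_mul_of_ne H ψ hij, ← Complex.ofReal_neg, Complex.ofReal_re]
    exact (abs_le.mp (Complex.abs_re_le_norm _)).1

lemma star_mul_mul_nonpos_of_re_dotProduct_le_deSigned [Fintype n]
    (h : (star ψ ⬝ᵥ H *ᵥ ψ).re ≤
      (star (fun k ↦ (‖ψ k‖ : ℂ)) ⬝ᵥ H.deSigned *ᵥ fun k ↦ (‖ψ k‖ : ℂ)).re)
    {i j : n} (hij : i ≠ j) : star (ψ i) * H i j * ψ j ≤ 0 := by
  have hle (p : n × n) (_ : p ∈ Finset.univ) := re_star_mul_deSigned_mul_le H ψ p.1 p.2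
  rw [Complex.re_dotProduct_mulVec, Complex.re_dotProduct_mulVec] at h
  have hij_eq := (Finset.sum_eq_sum_iff_of_le hle).mp (h.antisymm' (Finset.sum_le_sum hle))
    (i, j) (Finset.mem_univ _)
  rw [star_mul_deSigned_mul_of_ne H ψ hij, ← Complex.ofReal_neg, Complex.ofReal_re,
    eq_comm] at hij_eq
  exact Complex.re_eq_neg_norm.mp hij_eq

lemma exists_diagonal_unitary_conj_eq_deSigned [Fintype n] (hψ : ∀ i, ψ i ≠ 0)
    (h : ∀ i j, i ≠ j → star (ψ i) * H i j * ψ j ≤ 0) :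
    ∃ U ∈ unitaryGroup n ℂ, U.IsDiag ∧ U * H * Uᴴ = H.deSigned := by
  have hnorm : ∀ i, (‖ψ i‖ : ℂ) ≠ 0 := by simpa using hψ
  have hterm : ∀ i j, star (ψ i) * H i j * ψ j = star (‖ψ i‖ : ℂ) * H.deSigned i j * ‖ψ j‖ := by
    intro i j
    rcases eq_or_ne i j with rfl | hij
    · rw [star_mul_deSigned_mul_self]
    · rw [star_mul_deSigned_mul_of_ne H ψ hij, ← Complex.eq_neg_norm_of_nonpos (h i j hij)]
  set u : n → ℂ := fun i ↦ star (ψ i) / ‖ψ i‖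
  have hu : ∀ i, u i * star (u i) = 1 := by
    intro i
    simp only [u, star_div₀, Complex.star_def, Complex.conj_conj, Complex.conj_ofReal]
    rw [div_mul_div_comm, Complex.conj_mul', ← sq, div_self (pow_ne_zero 2 (hnorm i))]
  refine ⟨diagonal u, diagonal_mem_unitaryGroup hu, isDiag_diagonal u, ?_⟩
  ext i j
  rw [diagonal_mul_mul_conjTranspose_diagonal_apply]
  have := hterm i j
  simp only [u, star_div₀, Complex.star_def, Complex.conj_conj, Complex.conj_ofReal] at this ⊢
  calc _ = (starRingEnd ℂ) (ψ i) * H i j * ψ j / (‖ψ i‖ * ‖ψ j‖) := by ring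
    _ = H.deSigned i j := by
      rw [this, div_eq_iff (mul_ne_zero (hnorm i) (hnorm j))]
      ring

end Matrix

theorem designed_min_eigenvalue_eq_implies_diagonal_unitary_general
    (N : ℕ)
    (H Hd : Matrix (Fin N) (Fin N) ℂ)
    (hH : H.IsHermitian) (hHd : Hd.IsHermitian)
    (hdiag : ∀ i, Hd i i = H i i)
    (hoff : ∀ i j, i ≠ j → Hd i j = -(‖H i j‖ : ℂ))
    (ψ : Fin N → ℂ)
    (hψeig : H.mulVec ψ = ((⨅ i, hH.eigenvalues i : ℝ) : ℂ) • ψ)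
    (hψnz : ∀ i, ψ i ≠ 0)
    (heq : (⨅ i, hHd.eigenvalues i) = ⨅ i, hH.eigenvalues i) :
    ∃ U : Matrix (Fin N) (Fin N) ℂ,
      U ∈ Matrix.unitaryGroup (Fin N) ℂ ∧ U.IsDiag ∧ U * H * Uᴴ = Hd := by
  obtain rfl : Hd = H.deSigned := by
    ext i j
    rcases eq_or_ne i j with rfl | hij
    · simp [deSigned, hdiag]
    · simp [deSigned, hoff i j hij, hij]
  set φ : Fin N → ℂ := fun k ↦ (‖ψ k‖ : ℂ)
  have hφ : star φ ⬝ᵥ φ = star ψ ⬝ᵥ ψ := by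
    simp [φ, dotProduct, Complex.conj_mul', ← sq]
  refine H.exists_diagonal_unitary_conj_eq_deSigned ψ hψnz fun i j hij ↦
    H.star_mul_mul_nonpos_of_re_dotProduct_le_deSigned ψ ?_ hij
  calc (star ψ ⬝ᵥ H *ᵥ ψ).re = (⨅ i, hH.eigenvalues i) * (star ψ ⬝ᵥ ψ).re := by
        rw [hψeig, dotProduct_smul, smul_eq_mul, Complex.re_ofReal_mul]
    _ = (⨅ i, hHd.eigenvalues i) * (star φ ⬝ᵥ φ).re := by rw [heq, hφ]
    _ ≤ (star φ ⬝ᵥ H.deSigned *ᵥ φ).re := hHd.iInf_eigenvalues_mul_le_re_dotProduct φ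

/-- If `H` is Hermitian with a nowhere-vanishing ground state (eigenvector for
the smallest eigenvalue), and the smallest eigenvalue of its de-signed version `Hd` equals
that of `H`, then `H` and `Hd` are related by conjugation with a diagonal unitary. -/
theorem designed_min_eigenvalue_eq_implies_diagonal_unitary
    (N : ℕ) (hN : 1 ≤ N)
    (H Hd : Matrix (Fin N) (Fin N) ℂ)
    (hH : H.IsHermitian) (hHd : Hd.IsHermitian)
    (hdiag : ∀ i, Hd i i = H i i)
    (hoff : ∀ i j, i ≠ j → Hd i j = -(‖H i j‖ : ℂ))
    (ψ : Fin N → ℂ)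
    (hψeig : H.mulVec ψ = ((⨅ i, hH.eigenvalues i : ℝ) : ℂ) • ψ)
    (hψnz : ∀ i, ψ i ≠ 0)
    (heq : (⨅ i, hHd.eigenvalues i) = ⨅ i, hH.eigenvalues i) :
    ∃ U : Matrix (Fin N) (Fin N) ℂ,
      U ∈ Matrix.unitaryGroup (Fin N) ℂ ∧ U.IsDiag ∧ U * H * Uᴴ = Hd :=
  designed_min_eigenvalue_eq_implies_diagonal_unitary_general N H Hd hH hHd hdiag hoff ψ hψeig hψnz
    heq
end

section
/- Fix n ≥ 1, weights w : Finset(Fin n) → ℝ with w(S) ≥ 0 for all S, and signs ε : Finset(Fin n) → ℝ with ε(S) ∈ {−1, +1} for all S. Then for all x, e : Fin n → ZMod 2, one has f(x + e) − f(x) ≤ g(e). -/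
open Finset

/-- The character `χ_S(x)`: equals `+1` if `Σ_{i∈S} x_i = 0` in `ZMod 2`, and `-1` otherwise. -/
noncomputable def chi {n : ℕ} (S : Finset (Fin n)) (x : Fin n → ZMod 2) : ℝ :=
  if (∑ i ∈ S, x i) = 0 then 1 else -1

/-- The eigenvalue function of an X-diagonal Hamiltonian (shifted by a constant). -/
noncomputable def fEig {n : ℕ} (w ε : Finset (Fin n) → ℝ) (x : Fin n → ZMod 2) : ℝ :=
  ∑ S : Finset (Fin n), w S * (1 - ε S * chi S x)

/-- The eigenvalue function of the de-signed counterpart. -/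
noncomputable def gEig {n : ℕ} (w : Finset (Fin n) → ℝ) (x : Fin n → ZMod 2) : ℝ :=
  ∑ S : Finset (Fin n), w S * (1 - chi S x)

/-! Each character is multiplicative, `χ_S(x + e) = χ_S(x) χ_S(e)`, so the `S`-term of
`f(x + e) - f(x)` is `w(S) · ε(S) χ_S(x) · (1 - χ_S(e))`. Since `|ε(S) χ_S(x)| = 1` and
`1 - χ_S(e) ≥ 0`, this is at most `w(S) (1 - χ_S(e))`, the `S`-term of `g(e)`. -/

lemma ZMod.ite_add_eq_zero_eq_mul (a b : ZMod 2) :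
    (if a + b = 0 then 1 else -1 : ℝ) =
      (if a = 0 then 1 else -1) * (if b = 0 then 1 else -1) := by
  have h01 (c : ZMod 2) : c = 0 ∨ c = 1 := by decide +revert
  rcases h01 a with rfl | rfl <;> rcases h01 b with rfl | rfl <;>
    simp [show (1 : ZMod 2) + 1 = 0 from rfl]

section chi

variable {n : ℕ} (S : Finset (Fin n))

lemma chi_add (x e : Fin n → ZMod 2) : chi S (x + e) = chi S x * chi S e := by
  simp only [chi, Pi.add_apply, sum_add_distrib, ZMod.ite_add_eq_zero_eq_mul]

lemma abs_chi (x : Fin n → ZMod 2) : |chi S x| = 1 := by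
  unfold chi
  split_ifs <;> simp

lemma chi_le_one (x : Fin n → ZMod 2) : chi S x ≤ 1 :=
  (le_abs_self _).trans (abs_chi S x).le

end chi

lemma one_sub_mul_sub_one_sub_le {s b : ℝ} (hs : |s| ≤ 1) (hb : b ≤ 1) :
    (1 - s * b) - (1 - s) ≤ 1 - b :=
  calc (1 - s * b) - (1 - s) = s * (1 - b) := by ring
    _ ≤ |s| * (1 - b) := mul_le_mul_of_nonneg_right (le_abs_self s) (sub_nonneg.mpr hb)
    _ ≤ 1 - b := mul_le_of_le_one_left (sub_nonneg.mpr hb) hs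

theorem fEig_add_sub_le_gEig_general
    (n : ℕ)
    (w ε : Finset (Fin n) → ℝ)
    (hw : ∀ S, 0 ≤ w S)
    (hε : ∀ S, ε S = 1 ∨ ε S = -1) :
    ∀ x e : Fin n → ZMod 2, fEig w ε (x + e) - fEig w ε x ≤ gEig w e := by
  intro x e
  rw [fEig, fEig, gEig, ← sum_sub_distrib]
  refine sum_le_sum fun S _ => ?_
  have hsign : |ε S * chi S x| = 1 := by
    rw [abs_mul, abs_chi, mul_one, abs_eq zero_le_one]
    exact hε S
  rw [← mul_sub, chi_add, ← mul_assoc]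
  exact mul_le_mul_of_nonneg_left (one_sub_mul_sub_one_sub_le hsign.le (chi_le_one S e)) (hw S)

/-- For nonnegative weights `w` and signs `ε S ∈ {−1,+1}`,
`f(x+e) − f(x) ≤ g(e)` for all configurations `x, e`. -/
theorem fEig_add_sub_le_gEig
    (n : ℕ) (hn : 1 ≤ n)
    (w ε : Finset (Fin n) → ℝ)
    (hw : ∀ S, 0 ≤ w S)
    (hε : ∀ S, ε S = 1 ∨ ε S = -1) :
    ∀ x e : Fin n → ZMod 2, fEig w ε (x + e) - fEig w ε x ≤ gEig w e :=
  fEig_add_sub_le_gEig_general n w ε hw hε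
end
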